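/- arXiv:2204.10155 — 6 statements merged into one kernel-verified Lean document; each statement's English description precedes it below -/
import Mathlib

section
/- A weakly left cancellative semigroup S is right pseudo-finite if and only if it is finite. -/
/-- One step of an `X`-sequence in a semigroup `S` viewed as a right `S`-act:
`a = x * s` and `b = y * s` with `x, y ∈ X` and `s ∈ S¹` (the case `s = 1`
corresponds to `a = x` and `b = y`). -/
def sStep {S : Type*} [Semigroup S] (X : Set S) (a b : S) : Prop :=
  ∃ x ∈ X, ∃ y ∈ X, (a = x ∧ b = y) ∨ ∃ s : S, a = x * s ∧ b = y * s

/-- `seqN r n a b` : there is a chain of `n` steps of the relation `r` from `a` to `b`. -/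
def seqN {α : Type*} (r : α → α → Prop) : ℕ → α → α → Prop
  | 0, a, b => a = b
  | n + 1, a, b => ∃ c, r a c ∧ seqN r n c b

/-- A semigroup is right pseudo-finite if there are a finite `X ⊆ S` and a bound `N`
such that any two elements are connected by an `X`-sequence of length at most `N`. -/
def RightPseudoFinite (S : Type*) [Semigroup S] : Prop :=
  ∃ X : Finset S, ∃ N : ℕ, ∀ a b : S, ∃ n ≤ N, seqN (sStep (X : Set S)) n a b

/-- A weakly left cancellative semigroup is right pseudo-finite iff it is finite. -/
theorem weakly_left_cancellative_rightPseudoFinite_iff_finite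
    {S : Type*} [Semigroup S]
    (hwlc : ∀ a b : S, {s : S | a = b * s}.Finite) :
    RightPseudoFinite S ↔ Finite S := by
  constructor
  · rintro ⟨X, N, hXN⟩
    cases isEmpty_or_nonempty S with
    | inl h => infer_instance
    | inr h =>
      obtain ⟨a⟩ := h
      have hstep : ∀ c : S, {b | sStep (X : Set S) c b}.Finite := by
        intro c
        have hsub : {b | sStep (X : Set S) c b} ⊆
            ⋃ x ∈ (X : Set S), ⋃ y ∈ (X : Set S),
              insert y ((fun s => y * s) '' {s | c = x * s}) := by
          rintro b ⟨x, hx, y, hy, hcase⟩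
          refine Set.mem_biUnion hx (Set.mem_biUnion hy ?_)
          rcases hcase with ⟨hc, hb⟩ | ⟨s, hc, hb⟩
          · exact hb ▸ Set.mem_insert _ _
          · exact Set.mem_insert_of_mem _ ⟨s, hc, hb.symm⟩
        refine Set.Finite.subset ?_ hsub
        exact (X.finite_toSet).biUnion fun x _ =>
          (X.finite_toSet).biUnion fun y _ => ((hwlc c x).image _).insert y
      have hreach : ∀ n, ∀ c : S, {b | seqN (sStep (X : Set S)) n c b}.Finite := by
        intro n
        induction n with
        | zero =>
          intro c
          have : {b | seqN (sStep (X : Set S)) 0 c b} = {c} := by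
            ext b; simp [seqN, eq_comm]
          rw [this]; exact Set.finite_singleton c
        | succ n ih =>
          intro c
          have hsub : {b | seqN (sStep (X : Set S)) (n + 1) c b} ⊆
              ⋃ d ∈ {b | sStep (X : Set S) c b}, {b | seqN (sStep (X : Set S)) n d b} := by
            rintro b ⟨d, hd, hdb⟩
            exact Set.mem_biUnion hd hdb
          exact Set.Finite.subset ((hstep c).biUnion fun d _ => ih d) hsub
      have huniv : (Set.univ : Set S).Finite := by
        have hsub : (Set.univ : Set S) ⊆
            ⋃ n ∈ Finset.range (N + 1), {b | seqN (sStep (X : Set S)) n a b} := by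
          intro b _
          obtain ⟨n, hn, hseq⟩ := hXN a b
          exact Set.mem_biUnion (Finset.mem_range.mpr (Nat.lt_succ_of_le hn)) hseq
        exact Set.Finite.subset
          ((Finset.range (N + 1)).finite_toSet.biUnion fun n _ => hreach n a) hsub
      exact Set.finite_univ_iff.mp huniv
  · intro hfin
    have := Fintype.ofFinite S
    exact ⟨Finset.univ, 1, fun a b =>
      ⟨1, le_refl 1, b, ⟨a, by simp, b, by simp, Or.inl ⟨rfl, rfl⟩⟩, rfl⟩⟩
end

section
/- For a non-trivial semigroup S, the diagonal right S-act S × S (with action (a,b)c = (ac,bc)) is finitely generated if and only if S has right diameter 1, i.e., there is a finite set X ⊆ S generating the universal right congruence such that any two elements of S are connected by an X-sequence of length at most 1. -/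
/-- For a non-trivial semigroup `S`, the diagonal right `S`-act `S × S` is finitely
generated iff `S` has right diameter `1`: some finite `X ⊆ S` generates the universal
right congruence and connects any two elements by an `X`-sequence of length at most `1`. -/
theorem diagonal_fg_iff_right_diameter_one {S : Type*} [Semigroup S] [Nontrivial S] :
    (∃ U : Finset (S × S), ∀ p : S × S,
        ∃ u ∈ U, p = u ∨ ∃ s : S, p = (u.1 * s, u.2 * s)) ↔
    (∃ X : Finset S, ∀ a b : S, ∃ n ≤ 1, seqN (sStep (X : Set S)) n a b) := by
  classical
  constructor
  · rintro ⟨U, hU⟩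
    refine ⟨U.image Prod.fst ∪ U.image Prod.snd, fun a b => ?_⟩
    obtain ⟨u, hu, h⟩ := hU (a, b)
    refine ⟨1, le_refl 1, b, ⟨u.1, ?_, u.2, ?_, ?_⟩, rfl⟩
    · simp only [Finset.coe_union, Finset.coe_image, Set.mem_union, Set.mem_image,
        Finset.mem_coe]
      exact Or.inl ⟨u, hu, rfl⟩
    · simp only [Finset.coe_union, Finset.coe_image, Set.mem_union, Set.mem_image,
        Finset.mem_coe]
      exact Or.inr ⟨u, hu, rfl⟩
    · rcases h with h | ⟨s, h⟩
      · exact Or.inl ⟨congrArg Prod.fst h, congrArg Prod.snd h⟩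
      · exact Or.inr ⟨s, congrArg Prod.fst h, congrArg Prod.snd h⟩
  · rintro ⟨X, hX⟩
    refine ⟨X ×ˢ X, fun p => ?_⟩
    obtain ⟨a, b⟩ := p
    by_cases hab : a = b
    · subst hab
      obtain ⟨c, hc⟩ := exists_ne a
      obtain ⟨n, hn, h⟩ := hX a c
      interval_cases n
      · exact absurd h.symm hc
      · obtain ⟨d, ⟨x, hx, y, hy, hcase⟩, hd⟩ := h
        refine ⟨(x, x), Finset.mk_mem_product hx hx, ?_⟩
        rcases hcase with ⟨h1, _⟩ | ⟨s, h1, _⟩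
        · exact Or.inl (by simp [h1])
        · exact Or.inr ⟨s, by simp [h1]⟩
    · obtain ⟨n, hn, h⟩ := hX a b
      interval_cases n
      · exact absurd h hab
      · obtain ⟨d, ⟨x, hx, y, hy, hcase⟩, hd⟩ := h
        subst hd
        refine ⟨(x, y), Finset.mk_mem_product hx hy, ?_⟩
        rcases hcase with ⟨h1, h2⟩ | ⟨s, h1, h2⟩
        · exact Or.inl (by simp [h1, h2])
        · exact Or.inr ⟨s, by simp [h1, h2]⟩
end

section
/- Let S be a semigroup, A a right S-act, and B a homomorphic image of A via a surjective S-act homomorphism θ : A → B. If A is pseudo-finite, then B is pseudo-finite, and the diameter of B is at most the diameter of A. -/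
def aStep {S A : Type*} [Semigroup S] (act : A → S → A) (X : Set A) (a b : A) : Prop :=
  ∃ x ∈ X, ∃ y ∈ X, (a = x ∧ b = y) ∨ ∃ s : S, a = act x s ∧ b = act y s

lemma seqN_map {α β : Type*} {r : α → α → Prop} {r' : β → β → Prop} (f : α → β)
    (hf : ∀ a b, r a b → r' (f a) (f b)) :
    ∀ n a b, seqN r n a b → seqN r' n (f a) (f b) := by
  intro n
  induction n with
  | zero => intro a b h; exact congrArg f h
  | succ n ih =>
    rintro a b ⟨c, hc, hs⟩
    exact ⟨f c, hf _ _ hc, ih _ _ hs⟩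

/-- If `θ : A → B` is a surjective homomorphism of right `S`-acts and `A` is
pseudo-finite with diameter at most `N`, then so is `B`. -/
theorem image_of_pseudoFinite_act_pseudoFinite
    {S A B : Type*} [Semigroup S]
    (actA : A → S → A) (actB : B → S → B)
    (hA : ∀ (a : A) (s t : S), actA (actA a s) t = actA a (s * t))
    (hB : ∀ (b : B) (s t : S), actB (actB b s) t = actB b (s * t))
    (θ : A → B) (hsurj : Function.Surjective θ)
    (hhom : ∀ (a : A) (s : S), θ (actA a s) = actB (θ a) s)
    (N : ℕ) (X : Finset A)
    (hApf : ∀ a b : A, ∃ n ≤ N, seqN (aStep actA (X : Set A)) n a b) :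
    ∃ Y : Finset B, ∀ a b : B, ∃ n ≤ N, seqN (aStep actB (Y : Set B)) n a b := by
  classical
  refine ⟨X.image θ, ?_⟩
  intro a b
  obtain ⟨a', rfl⟩ := hsurj a
  obtain ⟨b', rfl⟩ := hsurj b
  obtain ⟨n, hn, hs⟩ := hApf a' b'
  refine ⟨n, hn, seqN_map θ ?_ n a' b' hs⟩
  rintro u v ⟨x, hx, y, hy, h | ⟨s, hu, hv⟩⟩
  · exact ⟨θ x, Finset.mem_coe.2 (Finset.mem_image_of_mem θ hx), θ y,
      Finset.mem_coe.2 (Finset.mem_image_of_mem θ hy),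
      Or.inl ⟨congrArg θ h.1, congrArg θ h.2⟩⟩
  · exact ⟨θ x, Finset.mem_coe.2 (Finset.mem_image_of_mem θ hx), θ y,
      Finset.mem_coe.2 (Finset.mem_image_of_mem θ hy),
      Or.inr ⟨s, by rw [hu, hhom], by rw [hv, hhom]⟩⟩
end

section
/- For a monoid S the following are equivalent: (1) S is right pseudo-finite; (2) some right ideal of S is pseudo-finite as a right S-act; (3) every finitely generated right S-act is pseudo-finite. Moreover, in the implication (1) ⇒ (3), the diameter of any finitely generated right S-act is at most 2·D_r(S)+1, where D_r(S) is the right diameter of S. -/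
universe u

/-- One step of an `X`-sequence in a right act over a monoid `S`:
`a = x · s`, `b = y · s` with `x, y ∈ X` and `s ∈ S`. -/
def mStepAct {S A : Type*} [Monoid S] (act : A → S → A) (X : Set A) (a b : A) : Prop :=
  ∃ x ∈ X, ∃ y ∈ X, ∃ s : S, a = act x s ∧ b = act y s

/-- An act is a lawful right act of the monoid `S`. -/
def IsRightAct {S A : Type*} [Monoid S] (act : A → S → A) : Prop :=
  (∀ (a : A) (s t : S), act (act a s) t = act a (s * t)) ∧ ∀ a : A, act a 1 = a

/-- Pseudo-finiteness of an act with bound `N` on the length of sequences. -/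
def MActPFBound {S A : Type*} [Monoid S] (act : A → S → A) (N : ℕ) : Prop :=
  ∃ X : Finset A, ∀ a b : A, ∃ n ≤ N, seqN (mStepAct act (X : Set A)) n a b

def MActPF {S A : Type*} [Monoid S] (act : A → S → A) : Prop :=
  ∃ N : ℕ, MActPFBound act N

/-- Finite generation of a right act over a monoid. -/
def MActFG {S A : Type*} [Monoid S] (act : A → S → A) : Prop :=
  ∃ U : Finset A, ∀ a : A, ∃ u ∈ U, ∃ s : S, a = act u s

/-- Right pseudo-finiteness of a monoid, with bound `N`. -/
def MRightPFBound (S : Type*) [Monoid S] (N : ℕ) : Prop :=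
  MActPFBound (fun (a : S) (s : S) => a * s) N

def MRightPF (S : Type*) [Monoid S] : Prop :=
  ∃ N : ℕ, MRightPFBound S N

/-- Pseudo-finiteness of a right ideal `I` of `S` as a right `S`-act. -/
def SetPF {S : Type*} [Monoid S] (I : Set S) : Prop :=
  ∃ X : Finset S, (X : Set S) ⊆ I ∧ ∃ N : ℕ, ∀ a ∈ I, ∀ b ∈ I, ∃ n ≤ N,
    seqN (mStepAct (fun (a : S) (s : S) => a * s) (X : Set S)) n a b

lemma seqN_trans {α : Type*} {r : α → α → Prop} :
    ∀ {n m : ℕ} {a b c : α}, seqN r n a b → seqN r m b c → seqN r (n + m) a c := by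
  intro n
  induction n with
  | zero => intro m a b c h h2; cases h; simpa using h2
  | succ k ih =>
    intro m a b c h h2
    obtain ⟨d, hd, hdb⟩ := h
    have he : k + 1 + m = (k + m) + 1 := by omega
    rw [he]
    exact ⟨d, hd, ih hdb h2⟩

lemma seqN_snoc {α : Type*} {r : α → α → Prop} :
    ∀ {n : ℕ} {a b c : α}, seqN r n a b → r b c → seqN r (n + 1) a c := by
  intro n
  induction n with
  | zero => intro a b c h h2; cases h; exact ⟨c, h2, rfl⟩
  | succ k ih =>
    intro a b c h h2
    obtain ⟨d, hd, hdb⟩ := h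
    exact ⟨d, hd, ih hdb h2⟩

lemma seqN_symm {α : Type*} {r : α → α → Prop} (hr : ∀ a b, r a b → r b a) :
    ∀ {n : ℕ} {a b : α}, seqN r n a b → seqN r n b a := by
  intro n
  induction n with
  | zero => intro a b h; exact h.symm
  | succ k ih =>
    intro a b h
    obtain ⟨c, hc, hcb⟩ := h
    exact seqN_snoc (ih hcb) (hr a c hc)

lemma seqN_mono {α : Type*} {r r' : α → α → Prop} (h : ∀ a b, r a b → r' a b) :
    ∀ {n : ℕ} {a b : α}, seqN r n a b → seqN r' n a b := by
  intro n
  induction n with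
  | zero => intro a b hab; exact hab
  | succ k ih =>
    intro a b hab
    obtain ⟨c, hc, hcb⟩ := hab
    exact ⟨c, h a c hc, ih hcb⟩

lemma mStepAct_symm {S A : Type*} [Monoid S] (act : A → S → A) (X : Set A) :
    ∀ a b, mStepAct act X a b → mStepAct act X b a := by
  rintro a b ⟨x, hx, y, hy, s, h1, h2⟩
  exact ⟨y, hy, x, hx, s, h2, h1⟩

lemma mStepAct_mono {S A : Type*} [Monoid S] (act : A → S → A) {X Y : Set A}
    (hXY : X ⊆ Y) : ∀ a b, mStepAct act X a b → mStepAct act Y a b := by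
  rintro a b ⟨x, hx, y, hy, s, h1, h2⟩
  exact ⟨x, hXY hx, y, hXY hy, s, h1, h2⟩

lemma seqN_map_s7 {S A : Type*} [Monoid S] {act : A → S → A} (hact : IsRightAct act) (u : A)
    {X : Set S} {Y : Set A} (hXY : ∀ x ∈ X, act u x ∈ Y) :
    ∀ {n : ℕ} {s t : S}, seqN (mStepAct (fun (a : S) (s : S) => a * s) X) n s t →
      seqN (mStepAct act Y) n (act u s) (act u t) := by
  intro n
  induction n with
  | zero => intro s t h; cases h; rfl
  | succ k ih =>
    intro s t h
    obtain ⟨c, ⟨x, hx, y, hy, r, h1, h2⟩, hcb⟩ := h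
    refine ⟨act u c, ⟨act u x, hXY x hx, act u y, hXY y hy, r, ?_, ?_⟩, ih hcb⟩
    · rw [h1]; exact (hact.1 u x r).symm
    · rw [h2]; exact (hact.1 u y r).symm

lemma main_bound {S : Type u} [Monoid S] (N : ℕ) (h : MRightPFBound S N)
    {A : Type u} (act : A → S → A) (ha : IsRightAct act) (hfg : MActFG act) :
    MActPFBound act (2 * N + 1) := by
  classical
  obtain ⟨X, hX⟩ := h
  obtain ⟨U, hU⟩ := hfg
  refine ⟨U ∪ (U ×ˢ X).image (fun p => act p.1 p.2), fun a b => ?_⟩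
  set Y : Finset A := U ∪ (U ×ˢ X).image (fun p => act p.1 p.2) with hY
  obtain ⟨u, hu, s, has⟩ := hU a
  obtain ⟨v, hv, t, hbt⟩ := hU b
  have hmemU : ∀ w ∈ U, w ∈ (Y : Set A) := fun w hw =>
    Finset.mem_coe.mpr (Finset.mem_union_left _ hw)
  have hmem : ∀ w ∈ U, ∀ x ∈ X, act w x ∈ (Y : Set A) := fun w hw x hx =>
    Finset.mem_coe.mpr (Finset.mem_union_right _
      (Finset.mem_image.mpr ⟨(w, x), Finset.mem_product.mpr ⟨hw, hx⟩, rfl⟩))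
  obtain ⟨n₁, hn₁, hseq₁⟩ := hX s 1
  obtain ⟨n₂, hn₂, hseq₂⟩ := hX t 1
  have h1 : seqN (mStepAct act (Y : Set A)) n₁ (act u s) (act u 1) :=
    seqN_map_s7 ha u (fun x hx => hmem u hu x hx) hseq₁
  have h2 : seqN (mStepAct act (Y : Set A)) n₂ (act v t) (act v 1) :=
    seqN_map_s7 ha v (fun x hx => hmem v hv x hx) hseq₂
  have hstep : mStepAct act (Y : Set A) u v :=
    ⟨u, hmemU u hu, v, hmemU v hv, 1, (ha.2 u).symm, (ha.2 v).symm⟩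
  have h2' : seqN (mStepAct act (Y : Set A)) n₂ v (act v t) := by
    have := seqN_symm (mStepAct_symm act _) h2
    rwa [ha.2 v] at this
  have h3 : seqN (mStepAct act (Y : Set A)) (n₂ + 1) (act u 1) (act v t) :=
    ⟨v, by rw [ha.2 u]; exact hstep, h2'⟩
  have htot : seqN (mStepAct act (Y : Set A)) (n₁ + (n₂ + 1)) a b := by
    rw [has, hbt]; exact seqN_trans h1 h3
  exact ⟨n₁ + (n₂ + 1), by omega, htot⟩

/-- For a monoid `S` the following are equivalent: (1) `S` is right pseudo-finite;
(2) some right ideal of `S` is pseudo-finite as a right `S`-act; (3) every finitely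
generated right `S`-act is pseudo-finite.  Moreover if `S` has right diameter at most
`N`, then every finitely generated right `S`-act has diameter at most `2N + 1`. -/
theorem monoid_rightPseudoFinite_tfae {S : Type u} [Monoid S] :
    (MRightPF S ↔
      ∃ I : Set S, I.Nonempty ∧ (∀ a ∈ I, ∀ s : S, a * s ∈ I) ∧ SetPF I) ∧
    (MRightPF S ↔
      ∀ {A : Type u} (act : A → S → A), IsRightAct act → MActFG act → MActPF act) ∧
    (∀ N : ℕ, MRightPFBound S N →
      ∀ {A : Type u} (act : A → S → A), IsRightAct act → MActFG act →
        MActPFBound act (2 * N + 1)) := by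
  classical
  have hmulact : IsRightAct (fun (a : S) (s : S) => a * s) :=
    ⟨fun a s t => mul_assoc a s t, fun a => mul_one a⟩
  refine ⟨⟨?_, ?_⟩, ⟨?_, ?_⟩, ?_⟩
  · rintro ⟨N, X, hX⟩
    exact ⟨Set.univ, ⟨1, trivial⟩, fun a _ s => trivial,
      ⟨X, Set.subset_univ _, N, fun a _ b _ => hX a b⟩⟩
  · rintro ⟨I, ⟨a, haI⟩, hideal, X, hXI, N, hI⟩
    refine ⟨N + 2, insert 1 (insert a X), fun s t => ?_⟩
    set Y : Finset S := insert 1 (insert a X) with hY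
    have h1Y : (1 : S) ∈ (Y : Set S) := by simp [hY]
    have haY : a ∈ (Y : Set S) := by simp [hY]
    have hXY : (X : Set S) ⊆ (Y : Set S) := by
      intro x hx; simp [hY]; tauto
    obtain ⟨n, hn, hseq⟩ := hI (a * s) (hideal a haI s) (a * t) (hideal a haI t)
    have hmid : seqN (mStepAct (fun (a : S) (s : S) => a * s) (Y : Set S)) n (a * s) (a * t) :=
      seqN_mono (mStepAct_mono _ hXY) hseq
    have hstep1 : mStepAct (fun (a : S) (s : S) => a * s) (Y : Set S) s (a * s) :=
      ⟨1, h1Y, a, haY, s, (one_mul s).symm, rfl⟩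
    have hstep2 : mStepAct (fun (a : S) (s : S) => a * s) (Y : Set S) (a * t) t :=
      ⟨a, haY, 1, h1Y, t, rfl, (one_mul t).symm⟩
    refine ⟨n + 2, by omega, ?_⟩
    show ∃ c, _ ∧ seqN _ (n + 1) c t
    exact ⟨a * s, hstep1, seqN_snoc hmid hstep2⟩
  · rintro ⟨N, h⟩
    intro A act ha hfg
    exact ⟨2 * N + 1, main_bound N h act ha hfg⟩
  · intro h
    have hfg : MActFG (fun (a : S) (s : S) => a * s) :=
      ⟨{1}, fun a => ⟨1, by simp, a, (one_mul a).symm⟩⟩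
    exact h _ hmulact hfg
  · intro N h A act ha hfg
    exact main_bound N h act ha hfg
end

section
/- Let T be a right reversible submonoid of a monoid S. If the universal right congruence on S is generated by a set X ⊆ T, then S is right reversible. -/
def mStep {S : Type*} [Monoid S] (X : Set S) (a b : S) : Prop :=
  ∃ x ∈ X, ∃ y ∈ X, ∃ s : S, a = x * s ∧ b = y * s

/-- If `T` is a right reversible submonoid of a monoid `S` and the universal right
congruence on `S` is generated by a set `X ⊆ T`, then `S` is right reversible. -/
theorem right_reversible_of_generating_set_in_submonoid
    {S : Type*} [Monoid S] (T : Submonoid S)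
    (hrev : ∀ a ∈ T, ∀ b ∈ T, ∃ u ∈ T, ∃ v ∈ T, u * a = v * b)
    (X : Set S) (hXT : X ⊆ (T : Set S))
    (hgen : ∀ a b : S, ∃ n : ℕ, seqN (mStep X) n a b) :
    ∀ a b : S, ∃ u v : S, u * a = v * b := by
  have key : ∀ n (a b : S), seqN (mStep X) n a b →
      ∃ u ∈ T, ∃ v : S, u * a = v * b := by
    intro n
    induction n with
    | zero =>
      intro a b h
      exact ⟨1, T.one_mem, 1, by rw [h]⟩
    | succ n ih =>
      rintro a b ⟨c, ⟨x, hx, y, hy, s, rfl, rfl⟩, hseq⟩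
      obtain ⟨u, huT, v, huv⟩ := ih _ b hseq
      obtain ⟨p, hpT, q, hqT, hpq⟩ := hrev x (hXT hx) (u * y) (T.mul_mem huT (hXT hy))
      refine ⟨p, hpT, q * v, ?_⟩
      rw [← mul_assoc, hpq, mul_assoc, mul_assoc, huv, ← mul_assoc]
  intro a b
  obtain ⟨n, hn⟩ := hgen a b
  obtain ⟨u, _, v, huv⟩ := key n a b hn
  exact ⟨u, v, huv⟩
end

section
/- Let S be a J-trivial monoid and a in S. An idempotent e of S is a local zero of a (i.e., ae = ea = e) if and only if e ≤_J a (i.e., e ∈ S a S, taking S as a monoid). -/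
/-- In a `J`-trivial monoid, an idempotent `e` is a local zero of `a`
(`ae = ea = e`) iff `e ≤_J a` (i.e. `e ∈ S a S`). -/
theorem local_zero_iff_leJ {S : Type*} [Monoid S]
    (hJ : ∀ a b : S, (∃ u v : S, a = u * b * v) → (∃ u v : S, b = u * a * v) → a = b)
    (a e : S) (he : e * e = e) :
    (a * e = e ∧ e * a = e) ↔ ∃ u v : S, e = u * a * v := by
  constructor
  · rintro ⟨h1, h2⟩
    exact ⟨e, e, by rw [h2, he]⟩
  · rintro ⟨u, v, h⟩
    have h1 : e = a * v * e := by
      apply hJ e (a * v * e)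
      · exact ⟨u, 1, by rw [mul_one, ← mul_assoc, ← mul_assoc, ← h, he]⟩
      · exact ⟨a * v, 1, by rw [mul_one]⟩
    have h2 : e = v * e := by
      apply hJ e (v * e)
      · exact ⟨a, 1, by rw [mul_one, ← mul_assoc]; exact h1⟩
      · exact ⟨v, 1, by rw [mul_one]⟩
    have hae : a * e = e := by
      conv_lhs => rw [h2, ← mul_assoc, ← h1]
    have h3 : e = e * u * a := by
      apply hJ e (e * u * a)
      · exact ⟨1, v, by rw [one_mul, mul_assoc, mul_assoc, ← mul_assoc u a v, ← h, he]⟩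
      · exact ⟨1, u * a, by rw [one_mul, mul_assoc]⟩
    have h4 : e = e * u := by
      apply hJ e (e * u)
      · exact ⟨1, a, by rw [one_mul]; exact h3⟩
      · exact ⟨1, u, by rw [one_mul]⟩
    have hea : e * a = e := by
      conv_lhs => rw [h4, ← h3]
    exact ⟨hae, hea⟩
end
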